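/- arXiv:1606.00129 — 2 statements merged into one kernel-verified Lean document; each statement's English description precedes it below -/
import Mathlib

section
/- Let X be a geodesic metric space, e ∈ X, and N a Morse gauge. Let ℓ₁, ℓ₂ : [0,∞) → X be N-Morse geodesic rays with ℓ₁(0) = ℓ₂(0) = e, and suppose the sequences (ℓ₁(n)) and (ℓ₂(n)) are equivalent, i.e. (ℓ₁(i)·ℓ₂(j))_e → ∞ as i,j → ∞. Then the Hausdorff distance between the images of ℓ₁ and ℓ₂ is at most 28N(3,0). -/
open Set Filter

section Defs

variable {X : Type*} [MetricSpace X]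

/-- A geodesic segment of length `L`, parametrized by arc length on `[0, L]`. -/
def IsGeodesicSeg (γ : ℝ → X) (L : ℝ) : Prop :=
  0 ≤ L ∧ ∀ s ∈ Icc (0:ℝ) L, ∀ t ∈ Icc (0:ℝ) L, dist (γ s) (γ t) = |s - t|

/-- A geodesic from `x` to `y`, parametrized by arc length on `[0, dist x y]`. -/
def IsGeodesicFromTo (γ : ℝ → X) (x y : X) : Prop :=
  IsGeodesicSeg γ (dist x y) ∧ γ 0 = x ∧ γ (dist x y) = y

/-- A geodesic ray, parametrized by arc length on `[0, ∞)`. -/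
def IsGeodesicRay (ℓ : ℝ → X) : Prop :=
  ∀ s ∈ Ici (0:ℝ), ∀ t ∈ Ici (0:ℝ), dist (ℓ s) (ℓ t) = |s - t|

/-- A geodesic metric space: any two points are joined by a geodesic. -/
def GeodesicSpace (X : Type*) [MetricSpace X] : Prop :=
  ∀ x y : X, ∃ γ : ℝ → X, IsGeodesicFromTo γ x y

/-- A `(K, C)`-quasi-geodesic defined on the interval `I ⊆ ℝ`. -/
def IsQuasiGeodesicOn (K C : ℝ) (I : Set ℝ) (σ : ℝ → X) : Prop :=
  ∀ s ∈ I, ∀ t ∈ I,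
    |s - t| / K - C ≤ dist (σ s) (σ t) ∧ dist (σ s) (σ t) ≤ K * |s - t| + C

/-- A Morse gauge: a nonnegative real `N K C` for every `K ≥ 1`, `C ≥ 0`. -/
def IsMorseGauge (N : ℝ → ℝ → ℝ) : Prop :=
  ∀ K C : ℝ, 1 ≤ K → 0 ≤ C → 0 ≤ N K C

/-- A subset `G ⊆ X` is `N`-Morse if for all `K ≥ 1`, `C ≥ 0`, every
`(K,C)`-quasi-geodesic with endpoints on `G` is contained in the closed
`N K C`-neighbourhood of `G`. -/
def IsMorseSet (N : ℝ → ℝ → ℝ) (G : Set X) : Prop :=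
  ∀ K C : ℝ, 1 ≤ K → 0 ≤ C → ∀ a b : ℝ, a ≤ b → ∀ σ : ℝ → X,
    IsQuasiGeodesicOn K C (Icc a b) σ → σ a ∈ G → σ b ∈ G →
    ∀ s ∈ Icc a b, ∃ g ∈ G, dist (σ s) g ≤ N K C

/-- An `N`-Morse geodesic from `x` to `y`. -/
def IsMorseGeodesicFromTo (N : ℝ → ℝ → ℝ) (γ : ℝ → X) (x y : X) : Prop :=
  IsGeodesicFromTo γ x y ∧ IsMorseSet N (γ '' Icc 0 (dist x y))

/-- An `N`-Morse geodesic ray. -/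
def IsMorseRay (N : ℝ → ℝ → ℝ) (ℓ : ℝ → X) : Prop :=
  IsGeodesicRay ℓ ∧ IsMorseSet N (ℓ '' Ici 0)

/-- The stratum `X^(N)_e`: points joined to `e` by an `N`-Morse geodesic. -/
def morseStratum (N : ℝ → ℝ → ℝ) (e : X) : Set X :=
  {y | ∃ γ : ℝ → X, IsMorseGeodesicFromTo N γ e y}

/-- The Gromov product `(x·y)_w`. -/
noncomputable def gprod (w x y : X) : ℝ := (dist w x + dist w y - dist x y) / 2

/-- A `B`-quasi-convex subset: geodesics with endpoints in `Y` stay in the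
closed `B`-neighbourhood of `Y`. -/
def IsQuasiConvex (B : ℝ) (Y : Set X) : Prop :=
  ∀ x ∈ Y, ∀ y ∈ Y, ∀ γ : ℝ → X, IsGeodesicFromTo γ x y →
    ∀ s ∈ Icc (0:ℝ) (dist x y), ∃ g ∈ Y, dist (γ s) g ≤ B

/-- An `N`-stable subset: quasi-convex, and any two of its points are joined
by an `N`-Morse geodesic of `X`. -/
def IsStableSubset (N : ℝ → ℝ → ℝ) (Y : Set X) : Prop :=
  (∃ B : ℝ, 0 ≤ B ∧ IsQuasiConvex B Y) ∧
    ∀ x ∈ Y, ∀ y ∈ Y, ∃ γ : ℝ → X, IsMorseGeodesicFromTo N γ x y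

variable {Y : Type*} [MetricSpace Y]

/-- A `(K,C)`-quasi-isometric embedding. -/
def IsQIEmbedding (K C : ℝ) (q : X → Y) : Prop :=
  ∀ x x' : X,
    dist x x' / K - C ≤ dist (q x) (q x') ∧ dist (q x) (q x') ≤ K * dist x x' + C

/-- A `(K,C)`-quasi-isometry. -/
def IsQuasiIsometry (K C : ℝ) (q : X → Y) : Prop :=
  IsQIEmbedding K C q ∧ ∀ y : Y, ∃ x : X, dist y (q x) ≤ C

end Defs

section Boundary

variable {X : Type*} [MetricSpace X]

/-- A sequence converges at infinity with respect to the basepoint `e`. -/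
def ConvAtInf (e : X) (f : ℕ → X) : Prop :=
  Tendsto (fun p : ℕ × ℕ => gprod e (f p.1) (f p.2)) atTop atTop

/-- Two sequences converging at infinity are equivalent. -/
def EquivAtInf (e : X) (f g : ℕ → X) : Prop :=
  Tendsto (fun p : ℕ × ℕ => gprod e (f p.1) (g p.2)) atTop atTop

/-- Sequences in `S` converging at infinity. -/
abbrev BSeq (S : Set X) (e : X) : Type _ :=
  {f : ℕ → X // (∀ n, f n ∈ S) ∧ ConvAtInf e f}

/-- The sequential boundary of `S ⊆ X` with basepoint `e`: sequences in `S`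
converging at infinity, up to equivalence. -/
def SeqBoundary (S : Set X) (e : X) : Type _ :=
  Quot (fun f g : BSeq S e => EquivAtInf e f.1 g.1)

/-- The boundary point represented by a convergent sequence. -/
def SeqBoundary.mk {S : Set X} {e : X} (f : BSeq S e) : SeqBoundary S e :=
  Quot.mk _ f

/-- The liminf of Gromov products of two sequences, valued in `EReal`. -/
noncomputable def seqGP (e : X) (f g : ℕ → X) : EReal :=
  Filter.liminf (fun p : ℕ × ℕ => ((gprod e (f p.1) (g p.2) : ℝ) : EReal)) atTop

/-- The Gromov product of two boundary points: the supremum over representing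
sequences of the liminf of Gromov products. -/
noncomputable def bGP (S : Set X) (e : X) (ξ η : SeqBoundary S e) : EReal :=
  sSup {r : EReal | ∃ f g : BSeq S e,
    SeqBoundary.mk f = ξ ∧ SeqBoundary.mk g = η ∧ r = seqGP e f.1 g.1}

open Classical in
/-- `exp (−ε·r)` for an extended real `r`, with value `0` at `r = ⊤`. -/
noncomputable def visGauge (ε : ℝ) (r : EReal) : ℝ :=
  if r = ⊤ then 0 else Real.exp (-ε * r.toReal)

/-- `d` is a visual metric on the sequential boundary of `S`:
a metric comparable to `exp(−ε·(Gromov product))` for some parameter `ε > 0`. -/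
def IsVisualMetric (S : Set X) (e : X)
    (d : SeqBoundary S e → SeqBoundary S e → ℝ) : Prop :=
  (∀ ξ η, 0 ≤ d ξ η) ∧ (∀ ξ η, d ξ η = d η ξ) ∧
  (∀ ξ η ζ, d ξ ζ ≤ d ξ η + d η ζ) ∧ (∀ ξ η, d ξ η = 0 ↔ ξ = η) ∧
  ∃ ε : ℝ, 0 < ε ∧ ∃ k₁ : ℝ, 0 < k₁ ∧ ∃ k₂ : ℝ, 0 < k₂ ∧
    ∀ ξ η, k₁ * visGauge ε (bGP S e ξ η) ≤ d ξ η ∧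
      d ξ η ≤ k₂ * visGauge ε (bGP S e ξ η)

/-- `η` is (the restriction of) a self-homeomorphism of `[0,∞)`. -/
def IsHomeoIci (η : ℝ → ℝ) : Prop :=
  ContinuousOn η (Ici 0) ∧ StrictMonoOn η (Ici 0) ∧ η 0 = 0 ∧
    Tendsto η atTop atTop ∧ ∀ t ∈ Ici (0:ℝ), 0 ≤ η t

/-- `F` is a quasi-symmetry onto its image, for the "distances" `dA`, `dB`. -/
def IsQuasiSymmetryOnto {A B : Type*} (dA : A → A → ℝ) (dB : B → B → ℝ)
    (F : A → B) : Prop :=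
  Function.Injective F ∧ ∃ η : ℝ → ℝ, IsHomeoIci η ∧
    ∀ x y z : A, x ≠ y → x ≠ z → y ≠ z →
      dB (F x) (F y) / dB (F x) (F z) ≤ η (dA x y / dA x z)

end Boundary

/-- `X` (with basepoint `x`) is stably subsumed by `Y` (with basepoint `y`):
every stratum of `X` quasi-isometrically embeds in some stratum of `Y`. -/
def StablySubsumed (X Y : Type*) [MetricSpace X] [MetricSpace Y]
    (x : X) (y : Y) : Prop :=
  ∀ N : ℝ → ℝ → ℝ, IsMorseGauge N →
    ∃ N' : ℝ → ℝ → ℝ, IsMorseGauge N' ∧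
      ∃ K C : ℝ, 1 ≤ K ∧ 0 ≤ C ∧ ∃ f : X → Y,
        (∀ a ∈ morseStratum N x, f a ∈ morseStratum N' y) ∧
        ∀ a ∈ morseStratum N x, ∀ b ∈ morseStratum N x,
          dist a b / K - C ≤ dist (f a) (f b) ∧ dist (f a) (f b) ≤ K * dist a b + C

/-- Durham–Taylor stability of `f : Y → X`. -/
def DTStable {Y X : Type*} [MetricSpace Y] [MetricSpace X] (f : Y → X) : Prop :=
  ∀ K C : ℝ, 1 ≤ K → 0 ≤ C → ∃ R : ℝ, 0 ≤ R ∧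
    ∀ a₁ b₁ a₂ b₂ : ℝ, a₁ ≤ b₁ → a₂ ≤ b₂ → ∀ σ₁ σ₂ : ℝ → X,
      IsQuasiGeodesicOn K C (Icc a₁ b₁) σ₁ → IsQuasiGeodesicOn K C (Icc a₂ b₂) σ₂ →
      σ₁ a₁ = σ₂ a₂ → σ₁ b₁ = σ₂ b₂ →
      σ₁ a₁ ∈ Set.range f → σ₁ b₁ ∈ Set.range f →
      (∀ s ∈ Icc a₁ b₁, ∃ t ∈ Icc a₂ b₂, dist (σ₁ s) (σ₂ t) ≤ R) ∧
      (∀ t ∈ Icc a₂ b₂, ∃ s ∈ Icc a₁ b₁, dist (σ₁ s) (σ₂ t) ≤ R)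

/-!
Given `r ≥ 0`, pick `x = ℓ₁ i` and `y = ℓ₂ j` with `(x·y)_e ≥ r`, a geodesic `[y, x]`, a point `c`
on it nearest to `e`, and a geodesic `δ = [e, c]`; its length `d(e, c)` is at least `(x·y)_e ≥ r`.
Following `δ` and then either half of `[y, x]` is a `(3,0)`-quasi-geodesic (the nearest-point
choice makes the corner at `c` cost at most a factor `3`) joining `e` to `x`, resp. `y`, so by the
Morse property `δ r` is `N(3,0)`-close to both rays. Since `d(e, δ r) = r`, the point `ℓ₁ r` is
then within `3 N(3,0)` of `ℓ₂`, and symmetrically.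
-/

section Geodesics

variable {X : Type*} [MetricSpace X]

lemma IsGeodesicSeg.dist_apply_zero {γ : ℝ → X} {L u : ℝ} (hγ : IsGeodesicSeg γ L)
    (hu : u ∈ Icc 0 L) : dist (γ 0) (γ u) = u := by
  rw [hγ.2 0 ⟨le_rfl, hγ.1⟩ u hu, zero_sub, abs_neg, abs_of_nonneg hu.1]

lemma IsGeodesicSeg.comp_add {γ : ℝ → X} {L v : ℝ} (hγ : IsGeodesicSeg γ L)
    (hv : v ∈ Icc 0 L) : IsGeodesicSeg (fun u => γ (v + u)) (L - v) := by
  refine ⟨sub_nonneg.2 hv.2, fun s hs t ht => ?_⟩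
  rw [hγ.2 _ ⟨by linarith [hv.1, hs.1], by linarith [hs.2]⟩ _
    ⟨by linarith [hv.1, ht.1], by linarith [ht.2]⟩, add_sub_add_left_eq_sub]

lemma IsGeodesicSeg.comp_sub {γ : ℝ → X} {L v : ℝ} (hγ : IsGeodesicSeg γ L)
    (hv : v ∈ Icc 0 L) : IsGeodesicSeg (fun u => γ (v - u)) v := by
  refine ⟨hv.1, fun s hs t ht => ?_⟩
  rw [hγ.2 _ ⟨by linarith [hs.2], by linarith [hv.2, hs.1]⟩ _
    ⟨by linarith [ht.2], by linarith [hv.2, ht.1]⟩, sub_sub_sub_cancel_left, abs_sub_comm]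

lemma IsGeodesicSeg.exists_isMinOn_dist {γ : ℝ → X} {L : ℝ} (hγ : IsGeodesicSeg γ L)
    (e : X) : ∃ v ∈ Icc 0 L, IsMinOn (fun u => dist e (γ u)) (Icc 0 L) v := by
  have hlip : LipschitzOnWith 1 γ (Icc 0 L) :=
    LipschitzOnWith.of_dist_le_mul fun s hs t ht => by
      rw [hγ.2 s hs t ht, Real.dist_eq, NNReal.coe_one, one_mul]
  exact isCompact_Icc.exists_isMinOn (nonempty_Icc.2 hγ.1)
    ((continuous_const.dist continuous_id).comp_continuousOn hlip.continuousOn)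

lemma IsGeodesicRay.dist_apply_zero {ℓ : ℝ → X} (hℓ : IsGeodesicRay ℓ) {u : ℝ} (hu : 0 ≤ u) :
    dist (ℓ 0) (ℓ u) = u := by
  rw [hℓ 0 self_mem_Ici u hu, zero_sub, abs_neg, abs_of_nonneg hu]

lemma IsGeodesicRay.dist_le_of_dist_le {ℓ : ℝ → X} (hℓ : IsGeodesicRay ℓ) {p : X} {a D : ℝ}
    (ha : 0 ≤ a) (hpa : dist p (ℓ a) ≤ D) {r : ℝ} (hr : 0 ≤ r) (hp : dist (ℓ 0) p = r) :
    dist (ℓ r) p ≤ 2 * D := by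
  have hra : |r - a| ≤ D := by
    rw [← hp, ← hℓ.dist_apply_zero ha, dist_comm (ℓ 0) p, dist_comm (ℓ 0)]
    exact (abs_dist_sub_le p (ℓ a) (ℓ 0)).trans hpa
  calc dist (ℓ r) p ≤ dist (ℓ r) (ℓ a) + dist (ℓ a) p := dist_triangle _ _ _
    _ ≤ D + D := add_le_add (hℓ r hr a ha ▸ hra) (dist_comm p (ℓ a) ▸ hpa)
    _ = 2 * D := by ring

end Geodesics

section GromovProduct

variable {X : Type*} [MetricSpace X]

lemma gprod_comm (w x y : X) : gprod w x y = gprod w y x := by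
  unfold gprod; rw [dist_comm x y]; ring

lemma gprod_le_dist_of_dist_add_dist_eq {w x y c : X}
    (hc : dist x c + dist c y = dist x y) : gprod w x y ≤ dist w c := by
  have hx := dist_triangle w c x
  have hy := dist_triangle w c y
  rw [dist_comm c x] at hx
  unfold gprod
  linarith

end GromovProduct

section Concatenation

variable {X : Type*}

noncomputable def concatAt (δ ω : ℝ → X) (m : ℝ) : ℝ → X :=
  fun t => if t ≤ m then δ t else ω (t - m)

lemma concatAt_add {δ ω : ℝ → X} {m R : ℝ} (hR : 0 ≤ R) (hω0 : ω 0 = δ m) :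
    concatAt δ ω m (m + R) = ω R := by
  unfold concatAt
  split_ifs with h
  · rw [le_antisymm (by linarith) hR, add_zero, hω0]
  · rw [add_sub_cancel_left]

variable [MetricSpace X]

lemma dist_add_dist_le_three_mul_dist {e p c q : X}
    (hp : dist e p + dist p c = dist e c) (hq : dist e c ≤ dist e q) :
    dist p c + dist c q ≤ 3 * dist p q := by
  have h₁ := dist_triangle e p q
  have h₂ := dist_triangle c p q
  rw [dist_comm c p] at h₂
  linarith

/-- `hmin` says that `ω 0 = δ m` is a point of `ω` nearest to `δ 0`. -/
lemma isQuasiGeodesicOn_concatAt {δ ω : ℝ → X} {m R : ℝ} (hδ : IsGeodesicSeg δ m)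
    (hω : IsGeodesicSeg ω R) (hω0 : ω 0 = δ m) (hmin : ∀ v ∈ Icc 0 R, m ≤ dist (δ 0) (ω v)) :
    IsQuasiGeodesicOn 3 0 (Icc 0 (m + R)) (concatAt δ ω m) := by
  suffices h : ∀ s ∈ Icc 0 (m + R), ∀ t ∈ Icc 0 (m + R), s ≤ t →
      (t - s) / 3 ≤ dist (concatAt δ ω m s) (concatAt δ ω m t) ∧
        dist (concatAt δ ω m s) (concatAt δ ω m t) ≤ 3 * (t - s) by
    intro s hs t ht
    rcases le_total s t with hst | hts
    · simpa [abs_sub_comm s t, abs_of_nonneg (sub_nonneg.2 hst)] using h s hs t ht hst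
    · simpa [dist_comm, abs_of_nonneg (sub_nonneg.2 hts)] using h t ht s hs hts
  intro s hs t ht hst
  simp only [concatAt]
  split_ifs with hsm htm htm
  · rw [hδ.2 s ⟨hs.1, hsm⟩ t ⟨ht.1, htm⟩, abs_sub_comm, abs_of_nonneg (sub_nonneg.2 hst)]
    constructor <;> linarith
  · rw [not_le] at htm
    have ht' : t - m ∈ Icc 0 R := ⟨by linarith, by linarith [ht.2]⟩
    have hpc : dist (δ s) (δ m) = m - s := by
      rw [hδ.2 s ⟨hs.1, hsm⟩ m ⟨hδ.1, le_rfl⟩, abs_sub_comm, abs_of_nonneg (by linarith)]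
    have hcq : dist (δ m) (ω (t - m)) = t - m := by
      rw [← hω0, hω.dist_apply_zero ht']
    have hbroken := dist_add_dist_le_three_mul_dist (e := δ 0)
      (by rw [hδ.dist_apply_zero ⟨hs.1, hsm⟩, hpc, hδ.dist_apply_zero ⟨hδ.1, le_rfl⟩]; ring)
      ((hδ.dist_apply_zero ⟨hδ.1, le_rfl⟩).trans_le (hmin _ ht'))
    have htri := dist_triangle (δ s) (δ m) (ω (t - m))
    rw [hpc, hcq] at hbroken htri
    constructor <;> linarith
  · exact absurd (hst.trans htm) hsm
  · have hs' : s - m ∈ Icc 0 R := ⟨by linarith, by linarith [hs.2]⟩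
    rw [hω.2 _ hs' _ ⟨by linarith, by linarith [ht.2]⟩, sub_sub_sub_cancel_right, abs_sub_comm,
      abs_of_nonneg (sub_nonneg.2 hst)]
    constructor <;> linarith

end Concatenation

section Morse

variable {X : Type*} [MetricSpace X] {N : ℝ → ℝ → ℝ}

lemma IsMorseSet.exists_dist_le_of_isGeodesicSeg {G : Set X} (hG : IsMorseSet N G)
    {δ ω : ℝ → X} {m R : ℝ} (hδ : IsGeodesicSeg δ m) (hω : IsGeodesicSeg ω R)
    (hω0 : ω 0 = δ m) (hmin : ∀ v ∈ Icc 0 R, m ≤ dist (δ 0) (ω v))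
    (hδG : δ 0 ∈ G) (hωG : ω R ∈ G) {r : ℝ} (hr : r ∈ Icc 0 m) :
    ∃ g ∈ G, dist (δ r) g ≤ N 3 0 := by
  have hσ0 : concatAt δ ω m 0 = δ 0 := if_pos hδ.1
  have hσr : concatAt δ ω m r = δ r := if_pos hr.2
  have hσR := concatAt_add hω.1 hω0
  have h := hG 3 0 (by norm_num) le_rfl 0 (m + R) (by linarith [hδ.1, hω.1]) _
    (isQuasiGeodesicOn_concatAt hδ hω hω0 hmin) (hσ0 ▸ hδG) (hσR ▸ hωG) r
    ⟨hr.1, by linarith [hr.2, hω.1]⟩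
  rwa [hσr] at h

lemma exists_dist_le_of_le_gprod (hX : GeodesicSpace X) {G₁ G₂ : Set X}
    (hG₁ : IsMorseSet N G₁) (hG₂ : IsMorseSet N G₂) {e x y : X} (he₁ : e ∈ G₁)
    (he₂ : e ∈ G₂) (hx : x ∈ G₁) (hy : y ∈ G₂) {r : ℝ} (hr : 0 ≤ r)
    (hrxy : r ≤ gprod e x y) :
    ∃ p, dist e p = r ∧ (∃ g ∈ G₁, dist p g ≤ N 3 0) ∧ ∃ g ∈ G₂, dist p g ≤ N 3 0 := by
  obtain ⟨γ, hγ, hγ0, hγL⟩ := hX y x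
  obtain ⟨v, hv, hvmin⟩ := hγ.exists_isMinOn_dist e
  obtain ⟨δ, hδ, hδ0, hδm⟩ := hX e (γ v)
  have hrm : r ≤ dist e (γ v) := by
    refine hrxy.trans (gprod_le_dist_of_dist_add_dist_eq ?_)
    have hvy : dist (γ 0) (γ v) = v := hγ.dist_apply_zero hv
    have hvx : dist (γ (dist y x)) (γ v) = dist y x - v := by
      rw [hγ.2 _ ⟨hγ.1, le_rfl⟩ v hv, abs_of_nonneg (sub_nonneg.2 hv.2)]
    rw [hγ0, dist_comm] at hvy
    rw [hγL] at hvx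
    rw [hvx, hvy, dist_comm x y, sub_add_cancel]
  have hmin : ∀ w ∈ Icc 0 (dist y x), dist e (γ v) ≤ dist (δ 0) (γ w) :=
    fun w hw => hδ0 ▸ hvmin hw
  refine ⟨δ r, by rw [← hδ0, hδ.dist_apply_zero ⟨hr, hrm⟩], ?_, ?_⟩
  · refine hG₁.exists_dist_le_of_isGeodesicSeg hδ (hγ.comp_add hv) (by simp [hδm])
      (fun w hw => hmin _ ⟨by linarith [hv.1, hw.1], by linarith [hw.2]⟩) (hδ0 ▸ he₁) ?_
      ⟨hr, hrm⟩
    simpa [hγL] using hx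
  · refine hG₂.exists_dist_le_of_isGeodesicSeg hδ (hγ.comp_sub hv) (by simp [hδm])
      (fun w hw => hmin _ ⟨by linarith [hw.2], by linarith [hv.2, hw.1]⟩) (hδ0 ▸ he₂) ?_
      ⟨hr, hrm⟩
    simpa [hγ0] using hy

lemma IsMorseRay.exists_dist_le_of_forall_le_gprod (hX : GeodesicSpace X) {e : X}
    {ℓ₁ ℓ₂ : ℝ → X} (h₁ : IsMorseRay N ℓ₁) (h₂ : IsMorseRay N ℓ₂) (he₁ : ℓ₁ 0 = e)
    (he₂ : ℓ₂ 0 = e) (hunb : ∀ r, ∃ x ∈ ℓ₁ '' Ici 0, ∃ y ∈ ℓ₂ '' Ici 0, r ≤ gprod e x y)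
    {s : ℝ} (hs : 0 ≤ s) : ∃ t ∈ Ici (0:ℝ), dist (ℓ₁ s) (ℓ₂ t) ≤ 3 * N 3 0 := by
  obtain ⟨x, hx, y, hy, hsxy⟩ := hunb s
  obtain ⟨p, hp, ⟨-, ⟨a, ha, rfl⟩, hpa⟩, -, ⟨t, ht, rfl⟩, hpt⟩ :=
    exists_dist_le_of_le_gprod hX h₁.2 h₂.2 (he₁ ▸ mem_image_of_mem _ self_mem_Ici)
      (he₂ ▸ mem_image_of_mem _ self_mem_Ici) hx hy hs hsxy
  refine ⟨t, ht, ?_⟩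
  calc dist (ℓ₁ s) (ℓ₂ t) ≤ dist (ℓ₁ s) p + dist p (ℓ₂ t) := dist_triangle _ _ _
    _ ≤ 2 * N 3 0 + N 3 0 :=
      add_le_add (h₁.1.dist_le_of_dist_le ha hpa hs (he₁ ▸ hp)) hpt
    _ = 3 * N 3 0 := by ring

end Morse

theorem statement9_general {X : Type*} [MetricSpace X] (hX : GeodesicSpace X) (e : X)
    (N : ℝ → ℝ → ℝ)
    (ℓ₁ ℓ₂ : ℝ → X) (h₁ : IsMorseRay N ℓ₁) (h₂ : IsMorseRay N ℓ₂)
    (he₁ : ℓ₁ 0 = e) (he₂ : ℓ₂ 0 = e)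
    (heq : Tendsto (fun p : ℕ × ℕ => gprod e (ℓ₁ (p.1 : ℝ)) (ℓ₂ (p.2 : ℝ)))
      atTop atTop) :
    (∀ s ∈ Ici (0:ℝ), ∃ t ∈ Ici (0:ℝ), dist (ℓ₁ s) (ℓ₂ t) ≤ 28 * N 3 0) ∧
    (∀ t ∈ Ici (0:ℝ), ∃ s ∈ Ici (0:ℝ), dist (ℓ₁ s) (ℓ₂ t) ≤ 28 * N 3 0) := by
  have hunb : ∀ r, ∃ i j : ℕ, r ≤ gprod e (ℓ₁ i) (ℓ₂ j) := fun r =>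
    let ⟨⟨i, j⟩, h⟩ := (heq.eventually (eventually_ge_atTop r)).exists
    ⟨i, j, h⟩
  have hmem : ∀ (ℓ : ℝ → X) (n : ℕ), ℓ n ∈ ℓ '' Ici 0 := fun ℓ n =>
    mem_image_of_mem ℓ (mem_Ici.2 (Nat.cast_nonneg n))
  have weaken : ∀ {x y : X}, dist x y ≤ 3 * N 3 0 → dist x y ≤ 28 * N 3 0 := fun h => by
    linarith [dist_nonneg.trans h]
  refine ⟨fun s hs => ?_, fun t ht => ?_⟩
  · obtain ⟨t, ht, hd⟩ := h₁.exists_dist_le_of_forall_le_gprod hX h₂ he₁ he₂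
      (fun r => let ⟨i, j, h⟩ := hunb r; ⟨_, hmem ℓ₁ i, _, hmem ℓ₂ j, h⟩) hs
    exact ⟨t, ht, weaken hd⟩
  · obtain ⟨s, hs, hd⟩ := h₂.exists_dist_le_of_forall_le_gprod hX h₁ he₂ he₁
      (fun r => let ⟨i, j, h⟩ := hunb r; ⟨_, hmem ℓ₂ j, _, hmem ℓ₁ i, gprod_comm e _ _ ▸ h⟩) ht
    exact ⟨s, hs, dist_comm (ℓ₂ t) (ℓ₁ s) ▸ weaken hd⟩

/-- two equivalent `N`-Morse geodesic rays based at `e` are at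
Hausdorff distance at most `28·N(3,0)`. -/
theorem statement9 {X : Type*} [MetricSpace X] (hX : GeodesicSpace X) (e : X)
    (N : ℝ → ℝ → ℝ) (hN : IsMorseGauge N)
    (ℓ₁ ℓ₂ : ℝ → X) (h₁ : IsMorseRay N ℓ₁) (h₂ : IsMorseRay N ℓ₂)
    (he₁ : ℓ₁ 0 = e) (he₂ : ℓ₂ 0 = e)
    (heq : Tendsto (fun p : ℕ × ℕ => gprod e (ℓ₁ (p.1 : ℝ)) (ℓ₂ (p.2 : ℝ)))
      atTop atTop) :
    (∀ s ∈ Ici (0:ℝ), ∃ t ∈ Ici (0:ℝ), dist (ℓ₁ s) (ℓ₂ t) ≤ 28 * N 3 0) ∧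
    (∀ t ∈ Ici (0:ℝ), ∃ s ∈ Ici (0:ℝ), dist (ℓ₁ s) (ℓ₂ t) ≤ 28 * N 3 0) :=
  statement9_general hX e N ℓ₁ ℓ₂ h₁ h₂ he₁ he₂ heq
end

section
/- Let Y be a quasi-geodesic metric space, X a geodesic metric space, and f : Y → X a quasi-isometric embedding. Then Y is stable in X in the sense of Durham–Taylor (i.e. for all K ≥ 1, C ≥ 0 there exists R = R(K,C) ≥ 0 such that any two (K,C)-quasi-geodesics in X with the same pair of endpoints in f(Y) are at Hausdorff distance less than R from each other) if and only if f(Y) is an N-stable subspace of X for some Morse gauge N. -/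
open Set Filter

/-! For `⇒`: applying Durham–Taylor stability to a geodesic and to the image of a quasi-geodesic
of `Y` gives quasi-convexity. A quasi-geodesic `τ` with endpoints on a geodesic `γ` between points
of `f(Y)`, and the subsegment of `γ` it spans, both become quasi-geodesics between points of `f(Y)`
once their endpoints are moved to nearby points of `f(Y)`; stability then keeps `τ` close to `γ`.

For `⇐`: two quasi-geodesics with the same endpoints both stay close to the Morse geodesic joining
them, and each is coarsely onto it by a discrete intermediate value argument, so they are close to
each other. -/

section WithEndpoints

variable {X : Type*}

noncomputable def withEndpoints (σ : ℝ → X) (a b : ℝ) (p q : X) : ℝ → X :=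
  fun u => if u < a then p else if b < u then q else σ u

theorem withEndpoints_of_mem {σ : ℝ → X} {a b u : ℝ} {p q : X} (hu : u ∈ Icc a b) :
    withEndpoints σ a b p q u = σ u := by
  rw [withEndpoints, if_neg (not_lt.2 hu.1), if_neg (not_lt.2 hu.2)]

theorem withEndpoints_left {σ : ℝ → X} {a b : ℝ} {p q : X} :
    withEndpoints σ a b p q (a - 1) = p := by
  rw [withEndpoints, if_pos (by linarith)]

theorem withEndpoints_right {σ : ℝ → X} {a b : ℝ} {p q : X} (hab : a ≤ b) :
    withEndpoints σ a b p q (b + 1) = q := by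
  rw [withEndpoints, if_neg (by linarith), if_pos (by linarith)]

end WithEndpoints

theorem exists_abs_sub_le_of_abs_sub_succ_le {w : ℕ → ℝ} {δ u : ℝ} {n : ℕ}
    (hstep : ∀ j, |w (j + 1) - w j| ≤ δ) (h₀ : w 0 - δ ≤ u) (hn : u ≤ w n + δ) :
    ∃ j, |w j - u| ≤ δ := by
  classical
  have hP : ∃ j, u ≤ w j + δ := ⟨n, hn⟩
  refine ⟨Nat.find hP, abs_le.2 ⟨by linarith [Nat.find_spec hP], ?_⟩⟩
  cases hj : Nat.find hP with
  | zero => linarith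
  | succ k =>
    have hk : ¬ u ≤ w k + δ := Nat.find_min hP (by omega)
    linarith [(abs_le.1 (hstep k)).2, (abs_nonneg _).trans (hstep 0)]

section QuasiGeodesics

variable {X : Type*} [MetricSpace X]

theorem isQuasiGeodesicOn_of_dist_eq {K C : ℝ} {I : Set ℝ} {g : ℝ → X} (hK : 1 ≤ K)
    (hC : 0 ≤ C) (hg : ∀ s ∈ I, ∀ t ∈ I, dist (g s) (g t) = |s - t|) :
    IsQuasiGeodesicOn K C I g := by
  intro s hs t ht
  rw [hg s hs t ht]
  exact ⟨by linarith [div_le_self (abs_nonneg (s - t)) hK],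
    by linarith [le_mul_of_one_le_left (abs_nonneg (s - t)) hK]⟩

theorem IsQuasiGeodesicOn.comp_qiEmbedding {Y : Type*} [MetricSpace Y] {K C Kf Cf : ℝ}
    {I : Set ℝ} {σ : ℝ → Y} {f : Y → X} (hσ : IsQuasiGeodesicOn K C I σ)
    (hf : IsQIEmbedding Kf Cf f) (hKf : 1 ≤ Kf) (hC : 0 ≤ C) :
    IsQuasiGeodesicOn (K * Kf) (Kf * C + Cf) I (f ∘ σ) := by
  intro s hs t ht
  obtain ⟨hlo, hup⟩ := hσ s hs t ht
  obtain ⟨hflo, hfup⟩ := hf (σ s) (σ t)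
  have hKf₀ : 0 < Kf := by linarith
  constructor
  · have hdiv : (|s - t| / K - C) / Kf ≤ dist (σ s) (σ t) / Kf := by gcongr
    have hCKf : C / Kf ≤ Kf * C := (div_le_self hC hKf).trans (le_mul_of_one_le_left hC hKf)
    rw [sub_div, div_div] at hdiv
    simp only [Function.comp_apply]
    linarith
  · calc dist (f (σ s)) (f (σ t)) ≤ Kf * dist (σ s) (σ t) + Cf := hfup
      _ ≤ Kf * (K * |s - t| + C) + Cf := by gcongr
      _ = K * Kf * |s - t| + (Kf * C + Cf) := by ring

theorem IsQuasiGeodesicOn.of_dist_le_comp {K C B δ : ℝ} {I J : Set ℝ} {σ τ : ℝ → X}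
    {π : ℝ → ℝ} (hσ : IsQuasiGeodesicOn K C I σ) (hK : 1 ≤ K) (hπ : MapsTo π J I)
    (hπ_lip : ∀ u ∈ J, ∀ v ∈ J, |π u - π v| ≤ |u - v|) (hπ_near : ∀ u ∈ J, |u - π u| ≤ δ)
    (hτ : ∀ u ∈ J, dist (τ u) (σ (π u)) ≤ B) :
    IsQuasiGeodesicOn K (C + 2 * (B + δ)) J τ := by
  intro u hu v hv
  obtain ⟨hlo, hup⟩ := hσ (π u) (hπ hu) (π v) (hπ hv)
  have hδ : 0 ≤ δ := (abs_nonneg _).trans (hπ_near u hu)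
  have hτu := hτ u hu
  have hτv := hτ v hv
  have hτσ := dist_triangle4 (τ u) (σ (π u)) (σ (π v)) (τ v)
  have hστ := dist_triangle4 (σ (π u)) (τ u) (τ v) (σ (π v))
  rw [dist_comm (σ (π v))] at hτσ
  rw [dist_comm (σ (π u)) (τ u)] at hστ
  constructor
  · have huv : |u - v| ≤ |π u - π v| + 2 * δ := by
      have := abs_sub_le u (π u) v
      have := abs_sub_le (π u) (π v) v
      linarith [hπ_near u hu, hπ_near v hv, abs_sub_comm (π v) v]
    have hdiv : |u - v| / K ≤ |π u - π v| / K + 2 * δ := by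
      calc |u - v| / K ≤ (|π u - π v| + 2 * δ) / K := by gcongr
        _ = |π u - π v| / K + 2 * δ / K := add_div _ _ _
        _ ≤ |π u - π v| / K + 2 * δ := by gcongr; exact div_le_self (by positivity) hK
    linarith
  · nlinarith [hπ_lip u hu v hv]


theorem IsQuasiGeodesicOn.withEndpoints {K C B a b : ℝ} {σ : ℝ → X} {p q : X}
    (hσ : IsQuasiGeodesicOn K C (Icc a b) σ) (hK : 1 ≤ K) (hab : a ≤ b)
    (hp : dist p (σ a) ≤ B) (hq : dist q (σ b) ≤ B) :
    IsQuasiGeodesicOn K (C + 2 * (B + 1)) (Icc (a - 1) (b + 1)) (withEndpoints σ a b p q) := by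
  refine hσ.of_dist_le_comp (π := fun u => projIcc a b hab u) hK (fun u _ => Subtype.prop _)
    (fun u _ v _ => abs_projIcc_sub_projIcc hab) (fun u hu => ?_) (fun u _ => ?_)
  · rw [coe_projIcc, abs_le, max_def, min_def]
    split_ifs <;> constructor <;> linarith [hu.1, hu.2]
  · unfold _root_.withEndpoints
    split_ifs with h₁ h₂
    · rwa [projIcc_of_le_left hab h₁.le]
    · rwa [projIcc_of_right_le hab h₂.le]
    · rw [projIcc_of_mem hab ⟨not_lt.1 h₁, not_lt.1 h₂⟩, dist_self]
      exact dist_nonneg.trans hp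

theorem IsGeodesicSeg.exists_quasiGeodesic_between {γ : ℝ → X} {D K C s₀ s₁ : ℝ}
    (hγ : IsGeodesicSeg γ D) (hK : 1 ≤ K) (hC : 0 ≤ C) (hs₀ : s₀ ∈ Icc 0 D)
    (hs₁ : s₁ ∈ Icc 0 D) :
    ∃ a b : ℝ, ∃ c : ℝ → X, a ≤ b ∧ IsQuasiGeodesicOn K C (Icc a b) c ∧ c a = γ s₀ ∧
      c b = γ s₁ ∧ c '' Icc a b ⊆ γ '' Icc 0 D := by
  rcases le_total s₀ s₁ with h | h
  · have hsub : Icc s₀ s₁ ⊆ Icc 0 D := Icc_subset_Icc hs₀.1 hs₁.2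
    exact ⟨s₀, s₁, γ, h, isQuasiGeodesicOn_of_dist_eq hK hC
      fun s hs t ht => hγ.2 s (hsub hs) t (hsub ht), rfl, rfl, image_mono hsub⟩
  · have hsub : MapsTo Neg.neg (Icc (-s₀) (-s₁)) (Icc 0 D) := fun s hs =>
      ⟨by linarith [hs.2, hs₁.1], by linarith [hs.1, hs₀.2]⟩
    refine ⟨-s₀, -s₁, fun t => γ (-t), neg_le_neg h,
      isQuasiGeodesicOn_of_dist_eq hK hC fun s hs t ht => ?_, by simp, by simp, ?_⟩
    · rw [hγ.2 _ (hsub hs) _ (hsub ht), neg_sub_neg, abs_sub_comm]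
    · rintro _ ⟨t, ht, rfl⟩
      exact ⟨-t, hsub ht, rfl⟩

def QuasiGeodesicsFellowTravel (S : Set X) (K C R : ℝ) : Prop :=
  ∀ a₁ b₁ a₂ b₂ : ℝ, a₁ ≤ b₁ → a₂ ≤ b₂ → ∀ σ₁ σ₂ : ℝ → X,
    IsQuasiGeodesicOn K C (Icc a₁ b₁) σ₁ → IsQuasiGeodesicOn K C (Icc a₂ b₂) σ₂ →
    σ₁ a₁ = σ₂ a₂ → σ₁ b₁ = σ₂ b₂ → σ₁ a₁ ∈ S → σ₁ b₁ ∈ S →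
    (∀ s ∈ Icc a₁ b₁, ∃ t ∈ Icc a₂ b₂, dist (σ₁ s) (σ₂ t) ≤ R) ∧
    (∀ t ∈ Icc a₂ b₂, ∃ s ∈ Icc a₁ b₁, dist (σ₁ s) (σ₂ t) ≤ R)

theorem dtStable_iff {Y : Type*} [MetricSpace Y] (f : Y → X) :
    DTStable f ↔ ∀ K C : ℝ, 1 ≤ K → 0 ≤ C →
      ∃ R, 0 ≤ R ∧ QuasiGeodesicsFellowTravel (range f) K C R :=
  Iff.rfl

theorem QuasiGeodesicsFellowTravel.isQuasiConvex {S : Set X} {K C B : ℝ}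
    (hS : QuasiGeodesicsFellowTravel S K C B) (hK : 1 ≤ K) (hC : 0 ≤ C)
    (hjoin : ∀ x ∈ S, ∀ y ∈ S, ∃ a b : ℝ, ∃ σ : ℝ → X, a ≤ b ∧
      IsQuasiGeodesicOn K C (Icc a b) σ ∧ σ a = x ∧ σ b = y ∧ MapsTo σ (Icc a b) S) :
    IsQuasiConvex B S := by
  intro x hx y hy γ hγ s hs
  obtain ⟨a, b, σ, hab, hσ, rfl, rfl, hσS⟩ := hjoin x hx y hy
  obtain ⟨t, ht, hd⟩ := (hS a b 0 _ hab dist_nonneg σ γ hσ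
    (isQuasiGeodesicOn_of_dist_eq hK hC hγ.1.2) hγ.2.1.symm hγ.2.2.symm hx hy).2 s hs
  exact ⟨σ t, hσS ht, by rwa [dist_comm]⟩

theorem QuasiGeodesicsFellowTravel.exists_dist_le_of_geodesic {S : Set X} {K C B R a b s : ℝ}
    {x y : X} {γ τ : ℝ → X} (hS : QuasiGeodesicsFellowTravel S K (C + 2 * (B + 1)) R)
    (hqc : IsQuasiConvex B S) (hK : 1 ≤ K) (hC : 0 ≤ C) (hx : x ∈ S) (hy : y ∈ S)
    (hγ : IsGeodesicFromTo γ x y) (hab : a ≤ b) (hτ : IsQuasiGeodesicOn K C (Icc a b) τ)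
    (hτa : τ a ∈ γ '' Icc 0 (dist x y)) (hτb : τ b ∈ γ '' Icc 0 (dist x y))
    (hs : s ∈ Icc a b) :
    ∃ g ∈ γ '' Icc 0 (dist x y), dist (τ s) g ≤ R + B := by
  obtain ⟨s₀, hs₀, hγs₀⟩ := hτa
  obtain ⟨s₁, hs₁, hγs₁⟩ := hτb
  obtain ⟨p, hpS, hp⟩ := hqc x hx y hy γ hγ s₀ hs₀
  obtain ⟨q, hqS, hq⟩ := hqc x hx y hy γ hγ s₁ hs₁
  obtain ⟨a', b', c, hab', hc, hca, hcb, hcγ⟩ :=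
    hγ.1.exists_quasiGeodesic_between hK hC hs₀ hs₁
  have hτ' := hτ.withEndpoints hK hab (p := p) (q := q) (B := B)
    (by rw [← hγs₀, dist_comm]; exact hp) (by rw [← hγs₁, dist_comm]; exact hq)
  have hc' := hc.withEndpoints hK hab' (p := p) (q := q) (B := B)
    (by rw [hca, dist_comm]; exact hp) (by rw [hcb, dist_comm]; exact hq)
  have hc'_near : ∀ t, ∃ g ∈ γ '' Icc 0 (dist x y), dist (withEndpoints c a' b' p q t) g ≤ B := by
    intro t
    unfold withEndpoints
    split_ifs with h₁ h₂
    · exact ⟨γ s₀, mem_image_of_mem _ hs₀, by rw [dist_comm]; exact hp⟩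
    · exact ⟨γ s₁, mem_image_of_mem _ hs₁, by rw [dist_comm]; exact hq⟩
    · exact ⟨c t, hcγ (mem_image_of_mem _ ⟨not_lt.1 h₁, not_lt.1 h₂⟩),
        by rw [dist_self]; exact dist_nonneg.trans hp⟩
  obtain ⟨t, -, hd⟩ := (hS _ _ _ _ (by linarith) (by linarith) _ _ hτ' hc'
    (by rw [withEndpoints_left, withEndpoints_left])
    (by rw [withEndpoints_right hab, withEndpoints_right hab'])
    (by rw [withEndpoints_left]; exact hpS) (by rw [withEndpoints_right hab]; exact hqS)).1 s
    ⟨by linarith [hs.1], by linarith [hs.2]⟩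
  rw [withEndpoints_of_mem hs] at hd
  obtain ⟨g, hg, hdg⟩ := hc'_near t
  exact ⟨g, hg, (dist_triangle _ _ _).trans (add_le_add hd hdg)⟩

theorem exists_morseGauge_of_fellowTravel {S : Set X} {B : ℝ}
    (hS : ∀ K C : ℝ, 1 ≤ K → 0 ≤ C → ∃ R, 0 ≤ R ∧ QuasiGeodesicsFellowTravel S K C R)
    (hB : 0 ≤ B) (hqc : IsQuasiConvex B S) :
    ∃ N, IsMorseGauge N ∧ ∀ x ∈ S, ∀ y ∈ S, ∀ γ : ℝ → X, IsGeodesicFromTo γ x y →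
      IsMorseSet N (γ '' Icc 0 (dist x y)) := by
  choose! R hR₀ hR using hS
  have hC' : ∀ C : ℝ, 0 ≤ C → 0 ≤ C + 2 * (B + 1) := fun C hC => by positivity
  refine ⟨fun K C => R K (C + 2 * (B + 1)) + B,
    fun K C hK hC => add_nonneg (hR₀ K _ hK (hC' C hC)) hB, ?_⟩
  intro x hx y hy γ hγ K C hK hC a b hab τ hτ hτa hτb s hs
  exact (hR K _ hK (hC' C hC)).exists_dist_le_of_geodesic hqc hK hC hx hy hγ hab hτ hτa hτb hs

theorem IsGeodesicSeg.exists_dist_le_of_near {γ σ : ℝ → X} {D K C M a b u : ℝ}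
    (hγ : IsGeodesicSeg γ D) (hK : 0 ≤ K) (hab : a ≤ b)
    (hσ : ∀ s ∈ Icc a b, ∀ t ∈ Icc a b, dist (σ s) (σ t) ≤ K * |s - t| + C)
    (hnear : ∀ s ∈ Icc a b, ∃ v ∈ Icc 0 D, dist (σ s) (γ v) ≤ M)
    (ha : σ a = γ 0) (hb : σ b = γ D) (hu : u ∈ Icc 0 D) :
    ∃ s ∈ Icc a b, dist (γ u) (σ s) ≤ 3 * M + K + C := by
  choose! w hwD hw using hnear
  let v : ℕ → ℝ := fun j => Icc.addNSMul hab 1 j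
  have hv : ∀ j, v j ∈ Icc a b := fun j => (Icc.addNSMul hab 1 j).2
  have hv_step : ∀ j, |v (j + 1) - v j| ≤ 1 := fun j =>
    (abs_projIcc_sub_projIcc hab).trans (by simp)
  obtain ⟨n, hn⟩ := Icc.addNSMul_eq_right hab one_pos
  have hva : v 0 = a := Icc.addNSMul_zero hab
  have hvb : v n = b := hn n le_rfl
  have hA : a ∈ Icc a b := left_mem_Icc.2 hab
  have hB : b ∈ Icc a b := right_mem_Icc.2 hab
  have hM : 0 ≤ M := dist_nonneg.trans (hw a hA)
  have hC : 0 ≤ C := by simpa using hσ a hA a hA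
  have hwa : |0 - w a| ≤ M := by
    rw [← hγ.2 0 (left_mem_Icc.2 hγ.1) _ (hwD a hA), ← ha]; exact hw a hA
  have hwb : |D - w b| ≤ M := by
    rw [← hγ.2 D (right_mem_Icc.2 hγ.1) _ (hwD b hB), ← hb]; exact hw b hB
  have hstep : ∀ j, |w (v (j + 1)) - w (v j)| ≤ 2 * M + K + C := by
    intro j
    rw [← hγ.2 _ (hwD _ (hv _)) _ (hwD _ (hv _))]
    linarith [dist_triangle4 (γ (w (v (j + 1)))) (σ (v (j + 1))) (σ (v j)) (γ (w (v j))),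
      dist_comm (γ (w (v (j + 1)))) (σ (v (j + 1))), hw _ (hv (j + 1)), hw _ (hv j),
      hσ _ (hv (j + 1)) _ (hv j), mul_le_mul_of_nonneg_left (hv_step j) hK]
  obtain ⟨j, hj⟩ := exists_abs_sub_le_of_abs_sub_succ_le (w := w ∘ v) (u := u) (n := n) hstep
    (by simp only [Function.comp_apply, hva]; linarith [abs_le.1 hwa, hu.1])
    (by simp only [Function.comp_apply, hvb]; linarith [abs_le.1 hwb, hu.2])
  refine ⟨v j, hv j, ?_⟩
  calc dist (γ u) (σ (v j)) ≤ dist (γ u) (γ (w (v j))) + dist (σ (v j)) (γ (w (v j))) := by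
        rw [dist_comm (σ _)]; exact dist_triangle _ _ _
    _ ≤ (2 * M + K + C) + M := by
        rw [hγ.2 _ hu _ (hwD _ (hv j)), abs_sub_comm]
        exact add_le_add hj (hw _ (hv j))
    _ = 3 * M + K + C := by ring

theorem IsMorseGeodesicFromTo.exists_dist_le {N : ℝ → ℝ → ℝ} {γ σ₁ σ₂ : ℝ → X} {x y : X}
    {K C a₁ b₁ a₂ b₂ : ℝ} (hγ : IsMorseGeodesicFromTo N γ x y) (hK : 1 ≤ K) (hC : 0 ≤ C)
    (h₁ : a₁ ≤ b₁) (h₂ : a₂ ≤ b₂) (hσ₁ : IsQuasiGeodesicOn K C (Icc a₁ b₁) σ₁)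
    (hσ₂ : IsQuasiGeodesicOn K C (Icc a₂ b₂) σ₂) (hσ₁a : σ₁ a₁ = x) (hσ₁b : σ₁ b₁ = y)
    (hσ₂a : σ₂ a₂ = x) (hσ₂b : σ₂ b₂ = y) :
    ∀ s ∈ Icc a₁ b₁, ∃ t ∈ Icc a₂ b₂, dist (σ₁ s) (σ₂ t) ≤ 4 * N K C + K + C := by
  obtain ⟨⟨hγseg, hγ0, hγD⟩, hmorse⟩ := hγ
  have hx : x ∈ γ '' Icc 0 (dist x y) := ⟨0, left_mem_Icc.2 hγseg.1, hγ0⟩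
  have hy : y ∈ γ '' Icc 0 (dist x y) := ⟨_, right_mem_Icc.2 hγseg.1, hγD⟩
  have hnear : ∀ {a b : ℝ} {σ : ℝ → X}, a ≤ b → IsQuasiGeodesicOn K C (Icc a b) σ →
      σ a = x → σ b = y → ∀ s ∈ Icc a b, ∃ v ∈ Icc 0 (dist x y), dist (σ s) (γ v) ≤ N K C := by
    intro a b σ hab hσ ha hb s hs
    obtain ⟨_, ⟨v, hv, rfl⟩, hd⟩ :=
      hmorse K C hK hC a b hab σ hσ (ha ▸ hx) (hb ▸ hy) s hs
    exact ⟨v, hv, hd⟩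
  intro s hs
  obtain ⟨u, hu, hsu⟩ := hnear h₁ hσ₁ hσ₁a hσ₁b s hs
  obtain ⟨t, ht, hut⟩ := hγseg.exists_dist_le_of_near (by linarith) h₂
    (fun s hs t ht => (hσ₂ s hs t ht).2) (hnear h₂ hσ₂ hσ₂a hσ₂b)
    (hσ₂a.trans hγ0.symm) (hσ₂b.trans hγD.symm) hu
  exact ⟨t, ht, by linarith [dist_triangle (σ₁ s) (γ u) (σ₂ t)]⟩

theorem quasiGeodesicsFellowTravel_of_morse {S : Set X} {N : ℝ → ℝ → ℝ} {K C : ℝ}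
    (hjoin : ∀ x ∈ S, ∀ y ∈ S, ∃ γ : ℝ → X, IsMorseGeodesicFromTo N γ x y)
    (hK : 1 ≤ K) (hC : 0 ≤ C) :
    QuasiGeodesicsFellowTravel S K C (4 * N K C + K + C) := by
  intro a₁ b₁ a₂ b₂ h₁ h₂ σ₁ σ₂ hσ₁ hσ₂ ha hb hx hy
  obtain ⟨γ, hγ⟩ := hjoin _ hx _ hy
  refine ⟨hγ.exists_dist_le hK hC h₁ h₂ hσ₁ hσ₂ rfl rfl ha.symm hb.symm, fun t ht => ?_⟩
  obtain ⟨s, hs, hd⟩ := hγ.exists_dist_le hK hC h₂ h₁ hσ₂ hσ₁ ha.symm hb.symm rfl rfl t ht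
  exact ⟨s, hs, by rwa [dist_comm]⟩

end QuasiGeodesics

/-- for a quasi-isometric embedding `f` of a quasi-geodesic space
`Y` into a geodesic space `X`, Durham–Taylor stability of `Y` in `X` is
equivalent to `f(Y)` being an `N`-stable subspace of `X` for some Morse
gauge `N`. -/
theorem statement16 {Y X : Type*} [MetricSpace Y] [MetricSpace X]
    (hX : GeodesicSpace X)
    (hY : ∃ K C : ℝ, 1 ≤ K ∧ 0 ≤ C ∧ ∀ y y' : Y, ∃ (a b : ℝ) (σ : ℝ → Y),
        a ≤ b ∧ IsQuasiGeodesicOn K C (Icc a b) σ ∧ σ a = y ∧ σ b = y')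
    (f : Y → X) (hf : ∃ K C : ℝ, 1 ≤ K ∧ 0 ≤ C ∧ IsQIEmbedding K C f) :
    DTStable f ↔
      ∃ N : ℝ → ℝ → ℝ, IsMorseGauge N ∧ IsStableSubset N (Set.range f) := by
  obtain ⟨KY, CY, hKY, hCY, hYjoin⟩ := hY
  obtain ⟨Kf, Cf, hKf, hCf, hfqi⟩ := hf
  rw [dtStable_iff]
  constructor
  · intro hDT
    have hjoin : ∀ x ∈ range f, ∀ y ∈ range f, ∃ a b : ℝ, ∃ σ : ℝ → X, a ≤ b ∧
        IsQuasiGeodesicOn (KY * Kf) (Kf * CY + Cf) (Icc a b) σ ∧ σ a = x ∧ σ b = y ∧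
        MapsTo σ (Icc a b) (range f) := by
      rintro _ ⟨y, rfl⟩ _ ⟨y', rfl⟩
      obtain ⟨a, b, σ, hab, hσ, rfl, rfl⟩ := hYjoin y y'
      exact ⟨a, b, f ∘ σ, hab, hσ.comp_qiEmbedding hfqi hKf hCY, rfl, rfl,
        fun s _ => mem_range_self _⟩
    have hK : 1 ≤ KY * Kf := one_le_mul_of_one_le_of_one_le hKY hKf
    have hC : 0 ≤ Kf * CY + Cf := by positivity
    obtain ⟨B, hB, hBtravel⟩ := hDT _ _ hK hC
    have hqc := hBtravel.isQuasiConvex hK hC hjoin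
    obtain ⟨N, hN, hmorse⟩ := exists_morseGauge_of_fellowTravel hDT hB hqc
    exact ⟨N, hN, ⟨B, hB, hqc⟩, fun x hx y hy =>
      (hX x y).imp fun γ hγ => ⟨hγ, hmorse x hx y hy γ hγ⟩⟩
  · rintro ⟨N, hN, -, hjoin⟩ K C hK hC
    exact ⟨_, by linarith [hN K C hK hC], quasiGeodesicsFellowTravel_of_morse hjoin hK hC⟩
end
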